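/- Let X : [0,1] → ℝ be a 1-dimensional continuously differentiable path and Y : [0,1] → ℝ^n a path. Viewing X ⊠ Y as a membrane into ℝ^n via (s,t) ↦ X(s)·Y(t), the k-th level id-signature satisfies σ^{(k)}(X ⊠ Y) = ((X(1) − X(0))^k / k!) · σ^{(k)}(Y), where σ^{(k)}(Y) is the k-th level path signature of Y. -/

import Mathlib

open MeasureTheory

noncomputable section

/-- The ordered simplex `0 ≤ t 0 ≤ t 1 ≤ ⋯ ≤ t (k-1) ≤ 1` in `Fin k → ℝ`. -/
def orderedSimplex (k : ℕ) : Set (Fin k → ℝ) :=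
  {t | Monotone t ∧ ∀ a, t a ∈ Set.Icc (0 : ℝ) 1}

/-- Iterated-integral (path) signature entry for a family of scalar coordinate
functions `f a : ℝ → ℝ`, i.e. `⟨σ(X), e_{i₁}* ⊗ ⋯ ⊗ e_{i_k}*⟩` with `f a = X_{i_a}`. -/
def pathSig {k : ℕ} (f : Fin k → ℝ → ℝ) : ℝ :=
  ∫ t in orderedSimplex k, ∏ a, deriv (f a) (t a)

/-- Mixed second partial derivative `∂²/∂s∂t`. -/
def d12 (f : ℝ → ℝ → ℝ) (s t : ℝ) : ℝ :=
  deriv (fun t' => deriv (fun s' => f s' t') s) t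

/-- id-signature entry for a family of scalar membrane coordinate functions. -/
def memSig {k : ℕ} (f : Fin k → ℝ → ℝ → ℝ) : ℝ :=
  ∫ p in (orderedSimplex k) ×ˢ (orderedSimplex k), ∏ a, d12 (f a) (p.1 a) (p.2 a)

/-
The membrane `(s, t) ↦ X(s) Y(t)` has mixed derivative `X'(s) Y'(t)`, so its id-signature
integrand splits over the product of simplices and the id-signature is the product of the path
signatures of `X` and of `Y`.  For the scalar path `X`, every tuple in `ℝ^k` is sorted by some
permutation, uniquely off the null set of tuples with a repeated entry; since the integrand
`∏ X'(tₐ)` is symmetric, the simplex carries a `1/k!` share of the cube integral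
`(X(1) - X(0))^k`.
-/

open Set Finset

lemma volume_setOf_not_injective {ι : Type*} [Fintype ι] :
    volume {t : ι → ℝ | ¬ Function.Injective t} = 0 := by
  have hsub : {t : ι → ℝ | ¬ Function.Injective t}
      ⊆ ⋃ (a : ι) (b : ι) (_ : a ≠ b), {t | t a = t b} := by
    intro t ht
    simp only [Function.Injective, not_forall, mem_ofPred_eq] at ht
    obtain ⟨a, b, hab, hne⟩ := ht
    exact mem_iUnion₂.2 ⟨a, b, mem_iUnion.2 ⟨hne, hab⟩⟩
  refine measure_mono_null hsub <| measure_iUnion_null fun a => measure_iUnion_null fun b =>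
    measure_iUnion_null fun hab => ?_
  have hker : {t : ι → ℝ | t a = t b}
      = (LinearMap.ker ((LinearMap.proj a : (ι → ℝ) →ₗ[ℝ] ℝ) - LinearMap.proj b) : Set _) := by
    ext t
    simp [sub_eq_zero]
  rw [hker]
  classical
  refine Measure.addHaar_submodule _ _ fun htop => ?_
  have hsingle : (Pi.single a 1 : ι → ℝ) ∈
      LinearMap.ker ((LinearMap.proj a : (ι → ℝ) →ₗ[ℝ] ℝ) - LinearMap.proj b) := by
    rw [htop]; trivial
  simp [Pi.single_eq_of_ne (Ne.symm hab)] at hsingle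

lemma iUnion_setOf_monotone_comp_perm {k : ℕ} :
    ⋃ σ : Equiv.Perm (Fin k), {t : Fin k → ℝ | Monotone (t ∘ σ)} = univ :=
  eq_univ_of_forall fun t => mem_iUnion.2 ⟨Tuple.sort t, Tuple.monotone_sort t⟩

lemma measurableSet_setOf_monotone_comp_perm {k : ℕ} (σ : Equiv.Perm (Fin k)) :
    MeasurableSet {t : Fin k → ℝ | Monotone (t ∘ σ)} :=
  (isClosed_monotone.preimage (continuous_pi fun a => continuous_apply (σ a) :
    Continuous fun t : Fin k → ℝ => t ∘ σ)).measurableSet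

lemma pairwise_aedisjoint_setOf_monotone_comp_perm {k : ℕ} :
    Pairwise (Function.onFun (AEDisjoint volume)
      fun σ : Equiv.Perm (Fin k) => {t : Fin k → ℝ | Monotone (t ∘ σ)}) := by
  intro σ τ hne
  refine measure_mono_null ?_ volume_setOf_not_injective
  rintro t ⟨hσ, hτ⟩ hinj
  exact hne <| Equiv.ext fun a => hinj (congrFun (Tuple.unique_monotone hσ hτ) a)

lemma setIntegral_setOf_comp_perm_mem {ι E : Type*} [Fintype ι] [NormedAddCommGroup E]
    [NormedSpace ℝ E] {F : (ι → ℝ) → E} (σ : Equiv.Perm ι) (hF : ∀ t, F (t ∘ σ) = F t)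
    (S : Set (ι → ℝ)) :
    ∫ t in {t | t ∘ σ ∈ S}, F t = ∫ t in S, F t := by
  let T := MeasurableEquiv.piCongrLeft (fun _ : ι => ℝ) σ.symm
  have hT : ∀ t, T t = t ∘ σ := fun t => funext fun a => by
    simpa [T, MeasurableEquiv.coe_piCongrLeft] using
      Equiv.piCongrLeft_apply_apply (fun _ : ι => ℝ) σ.symm t (σ a)
  have hpre : T ⁻¹' S = {t | t ∘ σ ∈ S} := by
    ext t
    simp [hT]
  calc ∫ t in {t | t ∘ σ ∈ S}, F t = ∫ t in T ⁻¹' S, F (T t) := by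
        simp only [hpre, hT, hF]
    _ = ∫ t in S, F t :=
        (volume_measurePreserving_piCongrLeft _ _).setIntegral_preimage_emb
          T.measurableEmbedding F S

theorem setIntegral_setOf_monotone_prod {k : ℕ} {g : ℝ → ℝ} (hg : Integrable g) :
    ∫ t in {t : Fin k → ℝ | Monotone t}, ∏ a, g (t a) = (∫ x, g x) ^ k / k.factorial := by
  have hcube : (∫ x, g x) ^ k
      = ∑ σ : Equiv.Perm (Fin k), ∫ t in {t : Fin k → ℝ | Monotone (t ∘ σ)}, ∏ a, g (t a) := by
    rw [← Fintype.card_fin k, ← integral_fintype_prod_volume_eq_pow, Fintype.card_fin,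
      ← setIntegral_univ, ← iUnion_setOf_monotone_comp_perm,
      integral_iUnion_ae (fun σ => (measurableSet_setOf_monotone_comp_perm σ).nullMeasurableSet)
        pairwise_aedisjoint_setOf_monotone_comp_perm
        (Integrable.fintype_prod (fun _ => hg)).integrableOn, tsum_fintype]
  have hpiece : ∀ σ : Equiv.Perm (Fin k),
      ∫ t in {t : Fin k → ℝ | Monotone (t ∘ σ)}, ∏ a, g (t a)
        = ∫ t in {t : Fin k → ℝ | Monotone t}, ∏ a, g (t a) :=
    fun σ => setIntegral_setOf_comp_perm_mem σ (fun t => Equiv.prod_comp σ fun a => g (t a))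
      {t | Monotone t}
  rw [hcube, Fintype.sum_congr _ _ hpiece, sum_const, card_univ, Fintype.card_perm,
    Fintype.card_fin, nsmul_eq_mul]
  field_simp

lemma measurableSet_orderedSimplex (k : ℕ) : MeasurableSet (orderedSimplex k) := by
  have : orderedSimplex k = {t | Monotone t} ∩ univ.pi fun _ => Icc 0 1 := by
    ext t
    exact and_congr_right' mem_univ_pi.symm
  rw [this]
  exact isClosed_monotone.measurableSet.inter (MeasurableSet.univ_pi fun _ => measurableSet_Icc)

theorem setIntegral_orderedSimplex_prod {k : ℕ} {h : ℝ → ℝ} (hh : IntegrableOn h (Icc 0 1)) :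
    ∫ t in orderedSimplex k, ∏ a, h (t a) = (∫ x in Icc 0 1, h x) ^ k / k.factorial := by
  set g := (Icc (0 : ℝ) 1).indicator h
  calc ∫ t in orderedSimplex k, ∏ a, h (t a) = ∫ t in orderedSimplex k, ∏ a, g (t a) :=
        setIntegral_congr_fun (measurableSet_orderedSimplex k) fun t ht =>
          prod_congr rfl fun a _ => (indicator_of_mem (ht.2 a) h).symm
    _ = ∫ t in {t : Fin k → ℝ | Monotone t}, ∏ a, g (t a) := by
        refine (setIntegral_eq_of_subset_of_forall_sdiff_eq_zero isClosed_monotone.measurableSet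
          (fun t ht => ht.1) fun t ⟨hmono, hnot⟩ => ?_).symm
        obtain ⟨a, ha⟩ : ∃ a, t a ∉ Icc (0 : ℝ) 1 := by
          by_contra! hall
          exact hnot ⟨hmono, hall⟩
        exact prod_eq_zero (mem_univ a) (indicator_of_notMem ha h)
    _ = (∫ x in Icc 0 1, h x) ^ k / k.factorial := by
        rw [setIntegral_setOf_monotone_prod (hh.integrable_indicator measurableSet_Icc),
          integral_indicator measurableSet_Icc]

theorem pathSig_const {k : ℕ} {X : ℝ → ℝ} (hX : ContDiff ℝ 1 X) :
    pathSig (fun _ : Fin k => X) = (X 1 - X 0) ^ k / k.factorial := by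
  have hX' : Continuous (deriv X) := hX.continuous_deriv le_rfl
  rw [pathSig, setIntegral_orderedSimplex_prod hX'.integrableOn_Icc,
    integral_Icc_eq_integral_Ioc, ← intervalIntegral.integral_of_le zero_le_one,
    intervalIntegral.integral_deriv_eq_sub (fun x _ => hX.differentiable one_ne_zero x)
      (hX'.intervalIntegrable 0 1)]

lemma d12_mul (f g : ℝ → ℝ) (s t : ℝ) :
    d12 (fun s t => f s * g t) s t = deriv f s * deriv g t := by
  simp only [d12, deriv_mul_const_field, deriv_const_mul_field]

theorem memSig_mul {k : ℕ} (f g : Fin k → ℝ → ℝ) :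
    memSig (fun a s t => f a s * g a t) = pathSig f * pathSig g := by
  simp only [memSig, pathSig, d12_mul, prod_mul_distrib]
  rw [Measure.volume_eq_prod, setIntegral_prod_mul (fun u : Fin k → ℝ => ∏ a, deriv (f a) (u a))
    (fun v : Fin k → ℝ => ∏ a, deriv (g a) (v a))]

theorem scaling_path_membrane_signature_general (n k : ℕ)
    (X : ℝ → ℝ) (Y : ℝ → Fin n → ℝ)
    (hX : ContDiff ℝ 1 X)
    (i : Fin k → Fin n) :
    memSig (fun a s t => X s * Y t (i a))
      = ((X 1 - X 0) ^ k / (Nat.factorial k : ℝ)) * pathSig (fun a t => Y t (i a)) := by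
  calc memSig (fun a s t => X s * Y t (i a))
      = pathSig (fun _ : Fin k => X) * pathSig (fun a t => Y t (i a)) := memSig_mul _ _
    _ = _ := by rw [pathSig_const hX]

/-- for a 1-dimensional path `X` and a path `Y` in `ℝⁿ`, the membrane
`(s,t) ↦ X(s)·Y(t)` has `k`-th level id-signature
`((X(1) − X(0))^k / k!) · σ^{(k)}(Y)`. -/
theorem scaling_path_membrane_signature (n k : ℕ)
    (X : ℝ → ℝ) (Y : ℝ → Fin n → ℝ)
    (hX : ContDiff ℝ 1 X) (hY : ContDiff ℝ 1 Y)
    (i : Fin k → Fin n) :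
    memSig (fun a s t => X s * Y t (i a))
      = ((X 1 - X 0) ^ k / (Nat.factorial k : ℝ)) * pathSig (fun a t => Y t (i a)) :=
  scaling_path_membrane_signature_general n k X Y hX i
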